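/- Let p be an odd prime, F_p ⊆ F_s ⊆ F_t ⊆ F_{t²} finite fields, N ≥ 1, a ∈ F_s, and f a quadratic hermitian form of rank 2ρ on F_t^{2N} with 1 ≤ ρ ≤ N. Then the number M of x ∈ F_t^{2N} satisfying Tr_{F_t/F_s}(f(x)) = a is: M = (1/s)(t^{2N} − (−1)^ρ t^{2N−ρ}) if a ≠ 0, and M = (1/s)(t^{2N} + (−1)^ρ (s−1) t^{2N−ρ}) if a = 0. -/

import Mathlib

/-- `H` is a sesquilinear hermitian form on `F_{t²}^N` (conjugation is `x ↦ x^t`). -/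
def IsSesquiHermitian {K : Type} [Field K] {N : ℕ} (t : ℕ)
    (H : (Fin N → K) → (Fin N → K) → K) : Prop :=
  (∀ x x' y, H (x + x') y = H x y + H x' y) ∧
  (∀ x y y', H x (y + y') = H x y + H x y') ∧
  (∀ (c : K) (x y : Fin N → K), H (c • x) y = c ^ t * H x y) ∧
  (∀ (c : K) (x y : Fin N → K), H x (c • y) = c * H x y) ∧
  (∀ x y, H x y = H y x ^ t)

/-- The `F_t`-isomorphism `ι : F_t^{2N} → F_{t²}^N`,
`ι(x₁,…,x₂ₙ) = (x₁ + α x₂, …, x₂ₙ₋₁ + α x₂ₙ)`. -/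
def iota (N : ℕ) (F K : Type) [Field F] [Field K] [Algebra F K] (α : K)
    (x : Fin (2 * N) → F) : Fin N → K :=
  fun i => algebraMap F K (x ⟨2 * i.1, by have := i.isLt; omega⟩) +
    algebraMap F K (x ⟨2 * i.1 + 1, by have := i.isLt; omega⟩) * α

/-!
Through `ι`, `f` is the diagonal `v ↦ H v v` of a hermitian form on `F_{t²}^N`, and the radical
of the polar form `B` is the preimage of the radical of `H`, so `ρ = N - dim_{F_{t²}} rad H`.
Splitting off a vector `v` with `H v v ≠ 0` gives `H (c v + y) (c v + y) = Nm c · H v v + H y y`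
on `F_{t²} v ⊕ v^⊥`, and for a nontrivial additive character `χ` of `F_t` the surjectivity of
the norm `Nm` gives `∑_c χ (Nm c · d) = -t`; by induction `∑_v χ (H v v) = (-1)^ρ t^{2N-ρ}`.
Every `χ = ψ (b · Tr(·))` with `b ≠ 0` and `ψ` primitive on `F_s` is nontrivial, and counting
the solutions of `Tr (f x) = a` by orthogonality of the characters of `F_s` gives the formula.
-/

open Finset Module

namespace FiniteField

variable {k L : Type*} [Field k] [Field L] [Fintype k] [Fintype L] [Algebra k L]

theorem finrank_eq_two_of_card_eq_sq (h : Fintype.card L = Fintype.card k ^ 2) :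
    finrank k L = 2 :=
  Nat.pow_right_injective Fintype.one_lt_card (card_eq_pow_finrank.symm.trans h)

theorem exists_pow_card_ne_self (h : Fintype.card L = Fintype.card k ^ 2) :
    ∃ c : L, c ^ Fintype.card k ≠ c := by
  have hfrob : frobeniusAlgHom k L ≠ 1 := fun h1 => by
    have := orderOf_frobeniusAlgHom k L
    rw [h1, orderOf_one, finrank_eq_two_of_card_eq_sq h] at this
    omega
  exact DFunLike.ne_iff.mp hfrob

theorem algebraMap_norm_eq_pow_card_add_one (h : Fintype.card L = Fintype.card k ^ 2) (x : L) :
    algebraMap k L (Algebra.norm k x) = x ^ (Fintype.card k + 1) := by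
  rw [algebraMap_norm_eq_pow, ← Fintype.card_eq_nat_card, ← Fintype.card_eq_nat_card, h]
  congr 1
  obtain ⟨q, hq⟩ : ∃ q, Fintype.card k = q + 2 :=
    Nat.exists_eq_add_of_le' (Fintype.one_lt_card (α := k))
  rw [hq]
  refine Nat.div_eq_of_eq_mul_left (by omega) ?_
  rw [show q + 2 - 1 = q + 1 by omega]
  exact Nat.sub_eq_of_eq_add (by ring)

/-- Since the norm is surjective, the sum is unchanged by `d ↦ u * d` for `u ≠ 0`; summing over
all `u` then counts only `c = 0`. -/
theorem card_sub_one_mul_sum_addChar_norm_mul {C : Type*} [CommRing C] [IsDomain C]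
    {χ : AddChar k C} (hχ : χ ≠ 1) {d : k} (hd : d ≠ 0) :
    (Fintype.card k - 1 : C) * ∑ c : L, χ (Algebra.norm k c * d) =
      Fintype.card k - Fintype.card L := by
  classical
  set S := ∑ c : L, χ (Algebra.norm k c * d)
  have hinv : ∀ u : k, u ≠ 0 → ∑ c : L, χ (Algebra.norm k c * (u * d)) = S := by
    intro u hu
    obtain ⟨e, rfl⟩ := norm_surjective k L u
    have he : e ≠ 0 := fun h0 => hu (by simp [h0])
    refine Fintype.sum_equiv (Equiv.mulLeft₀ e he) _ _ fun c => ?_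
    simp only [Equiv.mulLeft₀_apply, map_mul, mul_left_comm, mul_assoc]
  have hswap : ∑ u : k, ∑ c : L, χ (Algebra.norm k c * (u * d)) = Fintype.card k := by
    rw [Finset.sum_comm]
    simp_rw [show ∀ (c : L) (u : k), Algebra.norm k c * (u * d) = u * (Algebra.norm k c * d)
      from fun c u => by ring, AddChar.sum_mulShift _ (AddChar.IsPrimitive.of_ne_one hχ),
      mul_eq_zero, Algebra.norm_eq_zero_iff, hd, or_false]
    simp
  rw [← Finset.sum_erase_add _ _ (mem_univ 0), Finset.sum_congr rfl fun u hu =>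
    hinv u (ne_of_mem_erase hu)] at hswap
  simp only [sum_const, card_erase_of_mem (mem_univ _), card_univ, zero_mul, mul_zero,
    AddChar.map_zero_eq_one, nsmul_eq_mul, mul_one, Nat.cast_pred Fintype.card_pos] at hswap
  linear_combination hswap

theorem sum_addChar_norm_mul {C : Type*} [Field C] [CharZero C]
    (h : Fintype.card L = Fintype.card k ^ 2) {χ : AddChar k C} (hχ : χ ≠ 1) {d : k}
    (hd : d ≠ 0) :
    ∑ c : L, χ (Algebra.norm k c * d) = -Fintype.card k := by
  have key := card_sub_one_mul_sum_addChar_norm_mul (L := L) hχ hd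
  have hq : (Fintype.card k - 1 : C) ≠ 0 := by
    rw [sub_ne_zero, Ne, Nat.cast_eq_one]
    exact Fintype.one_lt_card.ne'
  rw [h, Nat.cast_pow] at key
  exact mul_left_cancel₀ hq (by linear_combination key)

end FiniteField

section HermitianForm

variable {K V : Type*} [Field K] [AddCommGroup V] [Module K V]

structure IsHermitianForm (t : ℕ) (H : V → V → K) : Prop where
  add_left : ∀ x x' y, H (x + x') y = H x y + H x' y
  add_right : ∀ x y y', H x (y + y') = H x y + H x y'
  smul_left : ∀ (c : K) x y, H (c • x) y = c ^ t * H x y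
  smul_right : ∀ (c : K) x y, H x (c • y) = c * H x y
  conj_symm : ∀ x y, H x y = H y x ^ t

namespace IsHermitianForm

variable {t : ℕ} {H : V → V → K} (hH : IsHermitianForm t H)
include hH

theorem zero_left (y : V) : H 0 y = 0 := by
  simpa using hH.add_left 0 0 y

theorem exponent_ne_zero : t ≠ 0 := by
  rintro rfl
  simpa [hH.zero_left] using hH.conj_symm 0 0

theorem eq_zero_symm {x y : V} (h : H x y = 0) : H y x = 0 := by
  rw [hH.conj_symm, h, zero_pow hH.exponent_ne_zero]

theorem restrict (p : Submodule K V) : IsHermitianForm t (fun x y : p => H x y) where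
  add_left x x' y := hH.add_left x x' y
  add_right x y y' := hH.add_right x y y'
  smul_left c x y := hH.smul_left c x y
  smul_right c x y := hH.smul_right c x y
  conj_symm x y := hH.conj_symm x y

def linearRight (x : V) : V →ₗ[K] K where
  toFun := H x
  map_add' := hH.add_right x
  map_smul' c y := hH.smul_right c x y

def radical : Submodule K V where
  carrier := {x | ∀ y, H x y = 0}
  add_mem' {x x'} hx hx' y := by simp only [hH.add_left, hx y, hx' y, add_zero]
  zero_mem' := hH.zero_left
  smul_mem' c x hx y := by simp only [hH.smul_left, hx y, mul_zero]

theorem mem_radical {x : V} : x ∈ hH.radical ↔ ∀ y, H x y = 0 := Iff.rfl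

theorem mem_radical_iff_forall_add_swap {c : K} (hc : c ^ t ≠ c) {x : V} :
    x ∈ hH.radical ↔ ∀ y, H x y + H y x = 0 := by
  refine ⟨fun hx y => by rw [hx y, hH.eq_zero_symm (hx y), add_zero], fun h y => ?_⟩
  have hcy := h (c • y)
  rw [hH.smul_left, hH.smul_right, show H y x = -H x y by linear_combination h y] at hcy
  have : (c - c ^ t) * H x y = 0 := by linear_combination hcy
  exact (mul_eq_zero.mp this).resolve_left (sub_ne_zero.mpr hc.symm)

theorem diag_add_sub_diag_sub_diag (x y : V) :
    H (x + y) (x + y) - H x x - H y y = H x y + H y x := by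
  simp only [hH.add_left, hH.add_right]
  ring

theorem radical_eq_top_of_diag_eq_zero {c : K} (hc : c ^ t ≠ c) (h : ∀ x, H x x = 0) :
    hH.radical = ⊤ := by
  refine eq_top_iff.mpr fun x _ => (hH.mem_radical_iff_forall_add_swap hc).mpr fun y => ?_
  simpa [h, eq_comm] using hH.diag_add_sub_diag_sub_diag x y

theorem diag_smul_add {v y : V} (hvy : H v y = 0) (c : K) :
    H (c • v + y) (c • v + y) = c ^ (t + 1) * H v v + H y y := by
  simp only [hH.add_left, hH.add_right, hH.smul_left, hH.smul_right, hvy, hH.eq_zero_symm hvy]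
  ring

def equivProdKer {v : V} (hv : H v v ≠ 0) : K × LinearMap.ker (hH.linearRight v) ≃ V where
  toFun p := p.1 • v + p.2
  invFun x := ⟨H v x / H v v, ⟨x - (H v x / H v v) • v, by
    rw [LinearMap.mem_ker, map_sub, map_smul, smul_eq_mul, sub_eq_zero]
    exact (div_mul_cancel₀ _ hv).symm⟩⟩
  left_inv := by
    rintro ⟨c, y, hy⟩
    have hc : H v (c • v + y) / H v v = c := by
      rw [hH.add_right, hH.smul_right, show H v y = 0 from hy, add_zero,
        mul_div_cancel_right₀ _ hv]
    simp only [hc, add_sub_cancel_left]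
  right_inv x := add_sub_cancel _ _

theorem finrank_ker_linearRight_add_one [FiniteDimensional K V] {v : V} (hv : H v v ≠ 0) :
    finrank K (LinearMap.ker (hH.linearRight v)) + 1 = finrank K V := by
  have hsurj : Function.Surjective (hH.linearRight v) := fun z =>
    ⟨(z / H v v) • v, by rw [map_smul, smul_eq_mul]; exact div_mul_cancel₀ z hv⟩
  rw [← (hH.linearRight v).finrank_range_add_finrank_ker, LinearMap.range_eq_top.mpr hsurj,
    finrank_top, finrank_self, add_comm]

theorem map_radical_restrict_ker {v : V} (hv : H v v ≠ 0) :
    (hH.restrict (LinearMap.ker (hH.linearRight v))).radical.map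
      (LinearMap.ker (hH.linearRight v)).subtype = hH.radical := by
  ext x
  simp only [Submodule.mem_map, Submodule.subtype_apply, hH.mem_radical]
  constructor
  · rintro ⟨y, hy, rfl⟩ w
    obtain ⟨⟨c, z⟩, rfl⟩ := (hH.equivProdKer hv).surjective w
    have hyv : H y v = 0 := hH.eq_zero_symm y.2
    simp [equivProdKer, hH.add_right, hH.smul_right, hyv, hy z]
  · intro hx
    exact ⟨⟨x, hH.eq_zero_symm (hx v)⟩, fun z => hx z, rfl⟩

end IsHermitianForm

end HermitianForm

theorem IsSesquiHermitian.isHermitianForm {K : Type} [Field K] {N t : ℕ}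
    {H : (Fin N → K) → (Fin N → K) → K} (hH : IsSesquiHermitian t H) :
    IsHermitianForm t H :=
  let ⟨add_left, add_right, smul_left, smul_right, conj_symm⟩ := hH
  ⟨add_left, add_right, smul_left, smul_right, conj_symm⟩

section QuadraticExtension

variable {F K : Type*} [Field F] [Field K] [Fintype F] [Fintype K] [Algebra F K]

theorem IsHermitianForm.sum_addChar_eq {C : Type*} [Field C] [CharZero C]
    (hcK : Fintype.card K = Fintype.card F ^ 2) {χ : AddChar F C} (hχ : χ ≠ 1)
    {V : Type*} [AddCommGroup V] [Module K V] [Fintype V]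
    {H : V → V → K} (hH : IsHermitianForm (Fintype.card F) H) {q : V → F}
    (hq : ∀ x, algebraMap F K (q x) = H x x) :
    ∑ x, χ (q x) = (-1) ^ (finrank K V - finrank K hH.radical) *
      (Fintype.card F : C) ^ (finrank K V + finrank K hH.radical) := by
  classical
  induction h : finrank K V using Nat.strong_induction_on generalizing V with
  | _ n ih =>
  by_cases hdiag : ∀ x, H x x = 0
  · obtain ⟨c, hc⟩ := FiniteField.exists_pow_card_ne_self hcK
    rw [hH.radical_eq_top_of_diag_eq_zero hc hdiag, finrank_top, h, Nat.sub_self, pow_zero, one_mul]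
    have hq0 : ∀ x, q x = 0 := fun x =>
      (algebraMap F K).injective (by rw [hq, hdiag, map_zero])
    simp only [hq0, AddChar.map_zero_eq_one, sum_const, card_univ, nsmul_eq_mul, mul_one]
    rw [card_eq_pow_finrank (K := K), hcK, h]
    push_cast
    ring
  push Not at hdiag
  obtain ⟨v, hv⟩ := hdiag
  set P := LinearMap.ker (hH.linearRight v)
  have hPv : finrank K P + 1 = n := h ▸ hH.finrank_ker_linearRight_add_one hv
  have hPrad : finrank K (hH.restrict P).radical = finrank K hH.radical := by
    rw [← hH.map_radical_restrict_ker hv, Submodule.finrank_map_subtype_eq]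
  have hqv : q v ≠ 0 := fun h0 => hv (by rw [← hq, h0, map_zero])
  have hsplit : ∀ (c : K) (y : P),
      q (c • v + y) = Algebra.norm F c * q v + q y := fun c y =>
    (algebraMap F K).injective <| by
      rw [map_add, map_mul, hq, hq, hq, hH.diag_smul_add y.2,
        FiniteField.algebraMap_norm_eq_pow_card_add_one hcK]
  have hrad_le : finrank K hH.radical ≤ finrank K P := hPrad ▸ Submodule.finrank_le _
  calc ∑ x, χ (q x) = ∑ p : K × P, χ (q (p.1 • v + p.2)) :=
        (Fintype.sum_equiv (hH.equivProdKer hv) _ _ fun _ => rfl).symm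
    _ = (∑ c : K, χ (Algebra.norm F c * q v)) * ∑ y : P, χ (q y) := by
        simp only [hsplit, AddChar.map_add_eq_mul, Fintype.sum_prod_type, Finset.sum_mul_sum]
    _ = _ := by
        rw [FiniteField.sum_addChar_norm_mul hcK hχ hqv,
          ih _ (by omega) (hH.restrict P) (fun y => hq y) rfl, hPrad, ← hPv,
          show finrank K P + 1 - finrank K hH.radical = finrank K P - finrank K hH.radical + 1
            by omega, add_right_comm, pow_succ, pow_succ]
        ring

theorem IsHermitianForm.finrank_eq_two_mul_finrank_radical
    (hcK : Fintype.card K = Fintype.card F ^ 2) {E V : Type*} [AddCommGroup E] [Module F E]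
    [AddCommGroup V] [Module K V] [Module F V] [IsScalarTower F K V]
    {H : V → V → K} (hH : IsHermitianForm (Fintype.card F) H) (ι : E ≃ₗ[F] V) {f : E → F}
    (hf : ∀ x, algebraMap F K (f x) = H (ι x) (ι x)) {W : Submodule F E}
    (hW : ∀ x, x ∈ W ↔ ∀ y, f (x + y) - f x - f y = 0) :
    finrank F W = 2 * finrank K hH.radical := by
  obtain ⟨c, hc⟩ := FiniteField.exists_pow_card_ne_self hcK
  have hWι : W = (hH.radical.restrictScalars F).comap ι.toLinearMap := by
    ext x
    rw [hW, Submodule.mem_comap, Submodule.restrictScalars_mem,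
      hH.mem_radical_iff_forall_add_swap hc, ι.surjective.forall]
    refine forall_congr' fun y => ?_
    rw [← map_eq_zero_iff _ (algebraMap F K).injective, map_sub, map_sub, hf, hf, hf, map_add,
      hH.diag_add_sub_diag_sub_diag]
    rfl
  rw [hWι, Submodule.comap_equiv_eq_map_symm, LinearEquiv.finrank_map_eq,
    ((Submodule.restrictScalarsEquiv F K _ hH.radical).restrictScalars F).finrank_eq,
    ← finrank_mul_finrank F K, FiniteField.finrank_eq_two_of_card_eq_sq hcK]

end QuadraticExtension

theorem AddChar.IsPrimitive.card_filter_eq_mul_card {k X C : Type*} [Field k] [Fintype k]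
    [DecidableEq k] [Fintype X] [CommRing C] [IsDomain C] {ψ : AddChar k C}
    (hψ : ψ.IsPrimitive) (F : X → k) (a : k) {S : C}
    (hS : ∀ b ≠ 0, ∑ x, ψ (b * F x) = S) :
    (#{x | F x = a} : C) * Fintype.card k =
      Fintype.card X + S * ((if a = 0 then (Fintype.card k : C) else 0) - 1) := by
  have horth : ∀ y : k, ∑ b : k, ψ (b * y) = if y = 0 then (Fintype.card k : C) else 0 :=
    fun y => by rw [AddChar.sum_mulShift y hψ, Nat.cast_ite, Nat.cast_zero]
  calc (#{x | F x = a} : C) * Fintype.card k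
      = ∑ x, ∑ b : k, ψ (b * (F x - a)) := by
        simp only [horth, sub_eq_zero, sum_ite, sum_const_zero, add_zero, sum_const,
          nsmul_eq_mul]
    _ = ∑ b : k, ψ (b * -a) * ∑ x, ψ (b * F x) := by
        rw [sum_comm]
        refine sum_congr rfl fun b _ => ?_
        rw [mul_sum]
        refine sum_congr rfl fun x _ => ?_
        rw [← AddChar.map_add_eq_mul]
        congr 1
        ring
    _ = Fintype.card X + S * ((if a = 0 then (Fintype.card k : C) else 0) - 1) := by
        rw [← sum_erase_add _ _ (mem_univ 0), sum_congr rfl fun b hb => by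
          rw [hS b (ne_of_mem_erase hb)], ← sum_mul, sum_erase_eq_sub (mem_univ 0), horth]
        simp only [neg_eq_zero, zero_mul, AddChar.map_zero_eq_one, one_mul, sum_const, card_univ,
          nsmul_eq_mul, mul_one]
        ring

theorem AddChar.IsPrimitive.mulShift_compAddMonoidHom_trace_ne_one {k L C : Type*} [Field k]
    [Field L] [Algebra k L] [FiniteDimensional k L] [Algebra.IsSeparable k L] [CommMonoid C]
    {ψ : AddChar k C} (hψ : ψ.IsPrimitive) {b : k} (hb : b ≠ 0) :
    (ψ.mulShift b).compAddMonoidHom (Algebra.trace k L).toAddMonoidHom ≠ 1 := by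
  obtain ⟨u, hu⟩ := AddChar.ne_one_iff.mp (hψ hb)
  obtain ⟨y, rfl⟩ := Algebra.trace_surjective k L u
  exact AddChar.ne_one_iff.mpr ⟨y, hu⟩

theorem notMem_range_algebraMap_of_adjoin_eq_top {F K : Type*} [Field F] [Field K]
    [Algebra F K] (hK : finrank F K ≠ 1) {α : K} (hα : Algebra.adjoin F {α} = ⊤) :
    α ∉ Set.range (algebraMap F K) := by
  rintro ⟨c, rfl⟩
  refine hK (Subalgebra.bot_eq_top_iff_finrank_eq_one.mp (hα ▸ le_antisymm bot_le ?_))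
  exact Algebra.adjoin_le (Set.singleton_subset_iff.mpr (Algebra.mem_bot.mpr ⟨c, rfl⟩))

section Iota

variable {N : ℕ} {F K : Type} [Field F] [Field K] [Algebra F K] {α : K}

variable (N F α) in
def iotaLinearMap : (Fin (2 * N) → F) →ₗ[F] (Fin N → K) where
  toFun := iota N F K α
  map_add' x y := by
    funext i
    simp only [iota, Pi.add_apply, map_add]
    ring
  map_smul' c x := by
    funext i
    simp only [iota, Pi.smul_apply, smul_eq_mul, map_mul, RingHom.id_apply, Algebra.smul_def]
    ring

theorem eq_zero_of_algebraMap_add_algebraMap_mul_eq_zero (hα : α ∉ Set.range (algebraMap F K))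
    {a b : F} (h : algebraMap F K a + algebraMap F K b * α = 0) : a = 0 ∧ b = 0 := by
  obtain rfl : b = 0 := by
    by_contra hb
    refine hα ⟨-a / b, ?_⟩
    rw [map_div₀, map_neg, div_eq_iff ((map_ne_zero _).mpr hb)]
    linear_combination -h
  simpa using h

theorem iotaLinearMap_injective (hα : α ∉ Set.range (algebraMap F K)) :
    Function.Injective (iotaLinearMap N F α) := by
  refine (injective_iff_map_eq_zero _).mpr fun x hx => funext fun k => ?_
  obtain ⟨i, hk | hk⟩ := Nat.even_or_odd' k
  all_goals
    have hi : i < N := by omega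
    have hpair := eq_zero_of_algebraMap_add_algebraMap_mul_eq_zero hα (congrFun hx ⟨i, hi⟩)
  · simpa [← hk] using hpair.1
  · simpa [← hk] using hpair.2

theorem iotaLinearMap_bijective [Fintype F] [Fintype K]
    (hcK : Fintype.card K = Fintype.card F ^ 2) (hα : α ∉ Set.range (algebraMap F K)) :
    Function.Bijective (iotaLinearMap N F α) :=
  (Fintype.bijective_iff_injective_and_card _).mpr
    ⟨iotaLinearMap_injective hα, by simp [hcK, pow_mul]⟩

end Iota

theorem stmt_18_general (s t N ρ : ℕ)
    (Fs Ft K : Type) [Field Fs] [Field Ft] [Field K]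
    [Fintype Fs] [Fintype Ft] [Fintype K]
    [Algebra Fs Ft] [Algebra Ft K]
    (hcs : Fintype.card Fs = s) (hct : Fintype.card Ft = t)
    (hcK : Fintype.card K = t ^ 2)
    (H : (Fin N → K) → (Fin N → K) → K) (hH : IsSesquiHermitian t H)
    (α : K) (hα : Algebra.adjoin Ft ({α} : Set K) = ⊤)
    (f : (Fin (2 * N) → Ft) → Ft)
    (hf : ∀ x, algebraMap Ft K (f x) = H (iota N Ft K α x) (iota N Ft K α x))
    (B : (Fin (2 * N) → Ft) → (Fin (2 * N) → Ft) → Ft)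
    (hB : ∀ x y, B x y = f (x + y) - f x - f y)
    (W : Submodule Ft (Fin (2 * N) → Ft)) (hW : ∀ x, x ∈ W ↔ ∀ y, B x y = 0)
    (hrk : 2 * N - Module.finrank Ft W = 2 * ρ)
    (a : Fs) :
    (a ≠ 0 →
      (Nat.card {x : Fin (2 * N) → Ft // Algebra.trace Fs Ft (f x) = a} : ℚ) =
        ((t : ℚ) ^ (2 * N) - (-1 : ℚ) ^ ρ * (t : ℚ) ^ (2 * N - ρ)) / s) ∧
    (a = 0 →
      (Nat.card {x : Fin (2 * N) → Ft // Algebra.trace Fs Ft (f x) = a} : ℚ) =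
        ((t : ℚ) ^ (2 * N) + (-1 : ℚ) ^ ρ * ((s : ℚ) - 1) * (t : ℚ) ^ (2 * N - ρ)) / s) := by
  classical
  subst hcs hct
  have hH' := hH.isHermitianForm
  let ι := LinearEquiv.ofBijective _ <| iotaLinearMap_bijective (N := N) hcK <|
    notMem_range_algebraMap_of_adjoin_eq_top
      (by rw [FiniteField.finrank_eq_two_of_card_eq_sq hcK]; decide) hα
  have hfι : ∀ x, algebraMap Ft K (f x) = H (ι x) (ι x) := hf
  have hrank := hH'.finrank_eq_two_mul_finrank_radical hcK ι hfι (W := W) fun x => by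
    simp only [hW, hB]
  have hrad_le : finrank K hH'.radical ≤ N := by simpa using hH'.radical.finrank_le
  set ψ := AddChar.FiniteField.primitiveChar_to_Complex Fs
  have hψ : ψ.IsPrimitive := AddChar.FiniteField.primitiveChar_to_Complex_isPrimitive Fs
  have hS : ∀ b ≠ 0, ∑ x, ψ (b * Algebra.trace Fs Ft (f x)) =
      (-1) ^ ρ * (Fintype.card Ft : ℂ) ^ (2 * N - ρ) := fun b hb =>
    calc _ = ∑ v, (ψ.mulShift b).compAddMonoidHom (Algebra.trace Fs Ft).toAddMonoidHom
          (f (ι.symm v)) := Fintype.sum_equiv ι _ _ fun x => by simp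
      _ = _ := hH'.sum_addChar_eq hcK (hψ.mulShift_compAddMonoidHom_trace_ne_one hb) fun v => by
          rw [hfι, ι.apply_symm_apply]
      _ = _ := by rw [finrank_fin_fun]; congr 2 <;> omega
  have hcount := hψ.card_filter_eq_mul_card (fun x => Algebra.trace Fs Ft (f x)) a hS
  rw [Fintype.card_fun, Fintype.card_fin] at hcount
  push_cast at hcount
  rw [Nat.card_eq_fintype_card, Fintype.card_subtype]
  have hs : (Fintype.card Fs : ℚ) ≠ 0 := Nat.cast_ne_zero.mpr Fintype.card_ne_zero
  refine ⟨fun ha => ?_, fun ha => ?_⟩ <;> rw [eq_div_iff hs] <;>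
    apply Rat.cast_injective (α := ℂ) <;> push_cast
  · rw [if_neg ha] at hcount
    linear_combination hcount
  · rw [if_pos ha] at hcount
    linear_combination hcount

/-- The number `M` of solutions of `Tr_{F_t/F_s}(f(x)) = a` in `F_t^{2N}`, for a
quadratic hermitian form `f` of rank `2ρ`: `M = (t^{2N} − (−1)^ρ t^{2N−ρ})/s` if
`a ≠ 0`, and `M = (t^{2N} + (−1)^ρ (s−1) t^{2N−ρ})/s` if `a = 0`. -/
theorem stmt_18 (p s t N ρ : ℕ) [Fact p.Prime] (hpodd : p ≠ 2)
    (hN : 1 ≤ N) (hρ1 : 1 ≤ ρ) (hρN : ρ ≤ N)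
    (Fs Ft K : Type) [Field Fs] [Field Ft] [Field K]
    [Fintype Fs] [Fintype Ft] [Fintype K] [DecidableEq Fs] [DecidableEq Ft]
    [Algebra (ZMod p) Fs] [Algebra (ZMod p) Ft] [Algebra Fs Ft] [Algebra Ft K]
    [IsScalarTower (ZMod p) Fs Ft]
    (hcs : Fintype.card Fs = s) (hct : Fintype.card Ft = t)
    (hcK : Fintype.card K = t ^ 2)
    (H : (Fin N → K) → (Fin N → K) → K) (hH : IsSesquiHermitian t H)
    (α : K) (hα : Algebra.adjoin Ft ({α} : Set K) = ⊤)
    (f : (Fin (2 * N) → Ft) → Ft)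
    (hf : ∀ x, algebraMap Ft K (f x) = H (iota N Ft K α x) (iota N Ft K α x))
    (B : (Fin (2 * N) → Ft) → (Fin (2 * N) → Ft) → Ft)
    (hB : ∀ x y, B x y = f (x + y) - f x - f y)
    (W : Submodule Ft (Fin (2 * N) → Ft)) (hW : ∀ x, x ∈ W ↔ ∀ y, B x y = 0)
    (hrk : 2 * N - Module.finrank Ft W = 2 * ρ)
    (a : Fs) :
    (a ≠ 0 →
      (Nat.card {x : Fin (2 * N) → Ft // Algebra.trace Fs Ft (f x) = a} : ℚ) =
        ((t : ℚ) ^ (2 * N) - (-1 : ℚ) ^ ρ * (t : ℚ) ^ (2 * N - ρ)) / s) ∧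
    (a = 0 →
      (Nat.card {x : Fin (2 * N) → Ft // Algebra.trace Fs Ft (f x) = a} : ℚ) =
        ((t : ℚ) ^ (2 * N) + (-1 : ℚ) ^ ρ * ((s : ℚ) - 1) * (t : ℚ) ^ (2 * N - ρ)) / s) :=
  stmt_18_general s t N ρ Fs Ft K hcs hct hcK H hH α hα f hf B hB W hW hrk a
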